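/- Let K be a finite extension of Q_p with residue field of cardinality q, normalized valuation v_P, and let f be an Eisenstein polynomial of degree n over K whose ramification polygon R passes through the points (1, J_0), (p^{s_1}, J_1), ..., (p^{s_{u-1}}, J_{u-1}), (p^{s_u}, 0), where J_t = a_t·n + b_t with 0 ≤ b_t ≤ n−1. Then for each 0 ≤ t ≤ u and each index i with p^{s_t} ≤ i ≤ n−1: v_P(f_i) ≥ 2 + a_t − v_P(C(i, p^{s_t})) if p^{s_t} ≤ i < b_t, and v_P(f_i) ≥ 1 + a_t − v_P(C(i, p^{s_t})) if i ≥ b_t; moreover if b_t ≠ 0 then v_P(f_{b_t}) = 1 + a_t − v_P(C(b_t, p^{s_t})). -/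

import Mathlib

open Polynomial

/-- An additive valuation `v` (written additively, with `v 0 = ⊤`) on a field `Ω`,
extending the `p`-adic valuation of `ℚ_[p]` (scaled by the ramification index `e`),
taking integer values on an intermediate field `K` and normalized so that a
uniformizer `unif` of `K` has valuation `1`. -/
structure PadicSetup (p : ℕ) [Fact p.Prime] (K Ω : Type*) [Field K] [Field Ω]
    [Algebra ℚ_[p] K] [Algebra ℚ_[p] Ω] [Algebra K Ω] [IsScalarTower ℚ_[p] K Ω] where
  v : Ω → WithTop ℚ
  v_top_iff : ∀ x : Ω, v x = ⊤ ↔ x = 0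
  v_mul : ∀ x y : Ω, v (x * y) = v x + v y
  v_add : ∀ x y : Ω, min (v x) (v y) ≤ v (x + y)
  e : ℕ
  e_pos : 0 < e
  v_padic : ∀ x : ℚ_[p], x ≠ 0 →
    v (algebraMap ℚ_[p] Ω x) = (((e : ℤ) * x.valuation : ℤ) : ℚ)
  v_int : ∀ x : K, x ≠ 0 → ∃ m : ℤ, v (algebraMap K Ω x) = ((m : ℚ) : WithTop ℚ)
  unif : K
  v_unif : v (algebraMap K Ω unif) = 1

variable {p : ℕ} [Fact p.Prime] {K Ω : Type*} [Field K] [Field Ω]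
    [Algebra ℚ_[p] K] [Algebra ℚ_[p] Ω] [Algebra K Ω] [IsScalarTower ℚ_[p] K Ω]

/-- `f` is an Eisenstein polynomial of degree `n` over `K` (with respect to the
normalized valuation of `K`): monic of degree `n`, all lower coefficients have
valuation at least `1`, and the constant coefficient has valuation exactly `1`. -/
def PadicSetup.IsEisensteinOfDegree (S : PadicSetup p K Ω) (f : K[X]) (n : ℕ) : Prop :=
  f.Monic ∧ f.natDegree = n ∧ (∀ i < n, 1 ≤ S.v (algebraMap K Ω (f.coeff i))) ∧
    S.v (algebraMap K Ω (f.coeff 0)) = 1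

/-- The `i`-th coefficient of the ramification polynomial `ρ(x) = f(αx+α)/αⁿ` of `f`,
namely `ρ_i = ∑_{k=i}^n C(k,i) f_k α^{k-n}`. -/
noncomputable def PadicSetup.rho (S : PadicSetup p K Ω) (f : K[X]) (n : ℕ) (α : Ω)
    (i : ℕ) : Ω :=
  ∑ k ∈ Finset.Icc i n, (k.choose i : Ω) * algebraMap K Ω (f.coeff k) * α ^ ((k : ℤ) - (n : ℤ))


/-! An Eisenstein polynomial has a one-segment Newton polygon, so `v(α) = 1/n`. As
`v_P(f_k) ∈ ℤ`, the term `C(k, P) f_k α^{k-n}` of `ρ_P` then has valuation in `(k + nℤ)/n`. For `0 < P ≤ k ≤ n` these classes are distinct, so `v(ρ_P)` is the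
valuation of a unique minimal term. Writing `n · v(ρ_P) = a n + b`, that term is the one with
`k ≡ b (mod n)`, i.e. `k = b` when `b ≠ 0`, which gives the equality; comparing every other
term with it gives the inequalities. -/

namespace AddValuation

variable {R Γ₀ ι : Type*} [Ring R] [LinearOrderedAddCommMonoidWithTop Γ₀] (v : AddValuation R Γ₀)

theorem map_sum_eq_of_lt [DecidableEq ι] {s : Finset ι} {f : ι → R} {j : ι}
    (hj : j ∈ s) (hf : ∀ i ∈ s \ {j}, v (f j) < v (f i)) :
    v (∑ i ∈ s, f i) = v (f j) :=
  Valuation.map_sum_eq_of_lt v hj hf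

theorem map_sum_eq_inf {s : Finset ι} {f : ι → R}
    (hf : ∀ i ∈ s, ∀ j ∈ s, v (f i) = v (f j) → v (f i) ≠ ⊤ → i = j) :
    v (∑ i ∈ s, f i) = s.inf fun i => v (f i) := by
  classical
  rcases s.eq_empty_or_nonempty with rfl | hs
  · simp
  obtain ⟨j, hj, hinf⟩ := s.exists_mem_eq_inf hs fun i => v (f i)
  have hle : ∀ i ∈ s, v (f j) ≤ v (f i) := fun i hi => hinf ▸ s.inf_le (f := fun i => v (f i)) hi
  rw [hinf]
  by_cases htop : v (f j) = ⊤
  · exact htop ▸ top_le_iff.1 (v.map_le_sum fun i hi => htop ▸ hle i hi)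
  refine v.map_sum_eq_of_lt hj fun i hi => ?_
  obtain ⟨his, hij⟩ := Finset.mem_sdiff.1 hi
  exact (hle i his).lt_of_ne fun h => hij (Finset.mem_singleton.2 (hf j hj i his h htop).symm)

theorem exists_map_le_of_sum_eq_zero {s : Finset ι} {f : ι → R} (hsum : ∑ i ∈ s, f i = 0)
    {j : ι} (hj : j ∈ s) (hfj : v (f j) ≠ ⊤) : ∃ i ∈ s, i ≠ j ∧ v (f i) ≤ v (f j) := by
  classical
  by_contra! h
  refine hfj ?_
  rw [← v.map_sum_eq_of_lt hj fun i hi => h i (Finset.mem_sdiff.1 hi).1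
    (Finset.notMem_singleton.1 (Finset.mem_sdiff.1 hi).2), hsum, v.map_zero]

end AddValuation

theorem WithTop.eq_coe_div_of_coe_mul_eq {F : Type*} [Field F] [DecidableEq F] {x : WithTop F}
    {q r : F} (hq : q ≠ 0) (h : (q : WithTop F) * x = r) : x = ((r / q : F) : WithTop F) := by
  obtain ⟨y, rfl⟩ := WithTop.ne_top_iff_exists.1 fun hx : x = ⊤ => by
    rw [hx, WithTop.mul_top (WithTop.coe_ne_zero.2 hq)] at h
    exact WithTop.top_ne_coe h
  rw [← WithTop.coe_mul, WithTop.coe_inj] at h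
  rw [WithTop.coe_inj, eq_div_iff hq, ← h, mul_comm]

namespace Int

variable {n x y j k : ℤ}

theorem eq_and_eq_of_mul_add_eq_mul_add (hj : 0 < j) (hjn : j ≤ n) (hk : 0 < k) (hkn : k ≤ n)
    (h : n * x + j = n * y + k) : x = y ∧ j = k := by
  have hdvd : n ∣ j - k := ⟨y - x, by linear_combination h⟩
  have hjk : j = k := by
    have := eq_zero_of_abs_lt_dvd hdvd (abs_sub_lt_iff.2 ⟨by omega, by omega⟩)
    omega
  subst hjk
  exact ⟨mul_left_cancel₀ (a := n) (by omega) (by linarith), rfl⟩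

theorem le_of_mul_add_le_mul_add (hn : 0 ≤ n) (hj : 0 ≤ j) (hk : k < n)
    (h : n * x + j ≤ n * y + k) : x ≤ y := by
  by_contra! hxy
  nlinarith

theorem lt_of_mul_add_le_mul_add (hn : 0 ≤ n) (hkj : k < j) (h : n * x + j ≤ n * y + k) :
    x < y := by
  by_contra! hxy
  nlinarith

end Int

namespace PadicSetup

variable (S : PadicSetup p K Ω)

theorem v_zero : S.v 0 = ⊤ := (S.v_top_iff 0).2 rfl

theorem v_one : S.v 1 = 0 := by
  obtain ⟨q, hq⟩ := WithTop.ne_top_iff_exists.1 ((S.v_top_iff 1).not.2 one_ne_zero)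
  have h := S.v_mul 1 1
  rw [one_mul, ← hq, ← WithTop.coe_add, WithTop.coe_inj] at h
  rw [← hq, show q = 0 by linarith, WithTop.coe_zero]

def toAddValuation : AddValuation Ω (WithTop ℚ) :=
  AddValuation.of S.v S.v_zero S.v_one S.v_add S.v_mul

@[simp]
theorem toAddValuation_apply (x : Ω) : S.toAddValuation x = S.v x := rfl

theorem exists_v_coeff_mul_pow_le_of_aeval_eq_zero {f : K[X]} {α : Ω} (hα : aeval α f = 0)
    {j : ℕ} (hj : j ≤ f.natDegree) (hfj : S.v (algebraMap K Ω (f.coeff j) * α ^ j) ≠ ⊤) :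
    ∃ i ≤ f.natDegree, i ≠ j ∧
      S.v (algebraMap K Ω (f.coeff i) * α ^ i) ≤ S.v (algebraMap K Ω (f.coeff j) * α ^ j) := by
  obtain ⟨i, hi, hij, hle⟩ := S.toAddValuation.exists_map_le_of_sum_eq_zero
    (f := fun i => algebraMap K Ω (f.coeff i) * α ^ i) (by
      rw [← hα, aeval_eq_sum_range]
      simp only [Algebra.smul_def]) (Finset.mem_range_succ_iff.2 hj) hfj
  exact ⟨i, Finset.mem_range_succ_iff.1 hi, hij, hle⟩

theorem v_root_of_isEisensteinOfDegree {f : K[X]} {n : ℕ} (hn : 0 < n)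
    (hf : S.IsEisensteinOfDegree f n) {α : Ω} (hα : aeval α f = 0) :
    S.v α = ((1 / n : ℚ) : WithTop ℚ) := by
  obtain ⟨hmonic, hdeg, hcoeff, hcoeff0⟩ := hf
  have hα0 : α ≠ 0 := by
    rintro rfl
    rw [aeval_def, eval₂_at_zero] at hα
    simp [hα, v_zero] at hcoeff0
  obtain ⟨c, hc⟩ := WithTop.ne_top_iff_exists.1 ((S.v_top_iff α).not.2 hα0)
  have hv (i : ℕ) : S.v (algebraMap K Ω (f.coeff i) * α ^ i) =
      S.v (algebraMap K Ω (f.coeff i)) + ((i * c : ℚ) : WithTop ℚ) := by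
    have h := S.toAddValuation.map_mul (algebraMap K Ω (f.coeff i)) (α ^ i)
    rw [S.toAddValuation.map_pow, toAddValuation_apply S α, ← hc, ← WithTop.coe_nsmul,
      nsmul_eq_mul] at h
    simpa only [toAddValuation_apply] using h
  have hv_lt {i : ℕ} (hi : i < n) :
      ((1 + i * c : ℚ) : WithTop ℚ) ≤ S.v (algebraMap K Ω (f.coeff i) * α ^ i) := by
    rw [hv, WithTop.coe_add, WithTop.coe_one]
    exact add_le_add_left (hcoeff i hi) _
  have hvn : S.v (algebraMap K Ω (f.coeff n) * α ^ n) = ((n * c : ℚ) : WithTop ℚ) := by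
    rw [hv, ← hdeg, hmonic.coeff_natDegree, map_one, v_one, zero_add, hdeg]
  have hv0 : S.v (algebraMap K Ω (f.coeff 0) * α ^ 0) = ((1 : ℚ) : WithTop ℚ) := by
    rw [hv, hcoeff0]
    simp
  obtain ⟨i, hi, hi_ne, hle⟩ := S.exists_v_coeff_mul_pow_le_of_aeval_eq_zero hα hdeg.ge
    (hvn ▸ WithTop.coe_ne_top)
  rw [hvn] at hle
  have hin : i < n := by omega
  have h1 : 1 + i * c ≤ n * c := WithTop.coe_le_coe.1 ((hv_lt hin).trans hle)
  have hc_pos : 0 < c := by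
    have : (i : ℚ) < n := by exact_mod_cast hin
    nlinarith
  obtain ⟨j, hj, hj0, hle0⟩ := S.exists_v_coeff_mul_pow_le_of_aeval_eq_zero hα (Nat.zero_le _)
    (hv0 ▸ WithTop.coe_ne_top)
  rw [hv0] at hle0
  have h2 : n * c ≤ 1 := by
    rcases (hdeg ▸ hj).eq_or_lt with rfl | hjn
    · exact WithTop.coe_le_coe.1 (hvn ▸ hle0)
    · have := WithTop.coe_le_coe.1 ((hv_lt hjn).trans hle0)
      have : (0 : ℚ) < j := by exact_mod_cast Nat.pos_of_ne_zero hj0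
      nlinarith
  rw [← hc, WithTop.coe_inj]
  have : (n : ℚ) ≠ 0 := by exact_mod_cast hn.ne'
  field_simp
  nlinarith

def rhoTerm (f : K[X]) (n : ℕ) (α : Ω) (i k : ℕ) : Ω :=
  (k.choose i : Ω) * algebraMap K Ω (f.coeff k) * α ^ ((k : ℤ) - (n : ℤ))

theorem rho_eq_sum_rhoTerm (f : K[X]) (n : ℕ) (α : Ω) (i : ℕ) :
    S.rho f n α i = ∑ k ∈ Finset.Icc i n, rhoTerm f n α i k :=
  rfl

variable {S} {f : K[X]} {n : ℕ} {α : Ω}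

theorem coeff_ne_zero_of_v_rhoTerm_ne_top {i k : ℕ} (h : S.v (rhoTerm f n α i k) ≠ ⊤) :
    f.coeff k ≠ 0 := fun hk => h (by simp [rhoTerm, hk, v_zero])

theorem v_rhoTerm (hn : 0 < n) (hα : S.v α = ((1 / n : ℚ) : WithTop ℚ)) {i k : ℕ} {W M : ℤ}
    (hW : S.v (algebraMap K Ω (k.choose i : K)) = ((W : ℚ) : WithTop ℚ))
    (hM : S.v (algebraMap K Ω (f.coeff k)) = ((M : ℚ) : WithTop ℚ)) :
    S.v (rhoTerm f n α i k) = (((n * (W + M) + k - n : ℤ) : ℚ) / n : ℚ) := by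
  have hα0 : α ≠ 0 := (S.v_top_iff α).not.1 (hα ▸ WithTop.coe_ne_top)
  have h := S.toAddValuation.map_div
    (x := algebraMap K Ω (k.choose i : K) * algebraMap K Ω (f.coeff k) * α ^ k) (y := α ^ n)
  simp only [AddValuation.map_mul, AddValuation.map_pow, toAddValuation_apply, hW, hM, hα,
    ← WithTop.coe_nsmul, ← WithTop.coe_add, ← WithTop.LinearOrderedAddCommGroup.coe_sub] at h
  rw [rhoTerm, zpow_sub₀ hα0, zpow_natCast, zpow_natCast, ← mul_div_assoc,
    ← map_natCast (algebraMap K Ω), h, WithTop.coe_inj]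
  have : (n : ℚ) ≠ 0 := by exact_mod_cast hn.ne'
  simp only [nsmul_eq_mul]
  push_cast
  field_simp

theorem exists_v_rhoTerm {w : ℕ → ℤ}
    (hw : ∀ m : ℕ, 0 < m → ((w m : ℚ) : WithTop ℚ) = S.v (algebraMap K Ω (m : K)))
    (hn : 0 < n) (hα : S.v α = ((1 / n : ℚ) : WithTop ℚ)) {i k : ℕ} (hik : i ≤ k)
    (hk : f.coeff k ≠ 0) : ∃ M : ℤ, S.v (algebraMap K Ω (f.coeff k)) = ((M : ℚ) : WithTop ℚ) ∧
      S.v (rhoTerm f n α i k) = (((n * (w (k.choose i) + M) + k - n : ℤ) : ℚ) / n : ℚ) := by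
  obtain ⟨M, hM⟩ := S.v_int _ hk
  exact ⟨M, hM, v_rhoTerm hn hα (hw _ (Nat.choose_pos hik)).symm hM⟩

theorem v_rho_eq_inf {w : ℕ → ℤ}
    (hw : ∀ m : ℕ, 0 < m → ((w m : ℚ) : WithTop ℚ) = S.v (algebraMap K Ω (m : K)))
    (hn : 0 < n) (hα : S.v α = ((1 / n : ℚ) : WithTop ℚ)) {P : ℕ} (hP : 0 < P) :
    S.v (S.rho f n α P) = (Finset.Icc P n).inf fun k => S.v (rhoTerm f n α P k) := by
  rw [rho_eq_sum_rhoTerm]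
  refine S.toAddValuation.map_sum_eq_inf fun j hj k hk hjk htop => ?_
  simp only [toAddValuation_apply] at hjk htop
  obtain ⟨hPj, hjn⟩ := Finset.mem_Icc.1 hj
  obtain ⟨hPk, hkn⟩ := Finset.mem_Icc.1 hk
  obtain ⟨Mj, -, hvj⟩ := exists_v_rhoTerm hw hn hα hPj (coeff_ne_zero_of_v_rhoTerm_ne_top htop)
  obtain ⟨Mk, -, hvk⟩ :=
    exists_v_rhoTerm hw hn hα hPk (coeff_ne_zero_of_v_rhoTerm_ne_top (hjk ▸ htop))
  have hnQ : (n : ℚ) ≠ 0 := by exact_mod_cast hn.ne'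
  rw [hvj, hvk, WithTop.coe_inj, div_left_inj' hnQ, Int.cast_inj] at hjk
  have := Int.eq_and_eq_of_mul_add_eq_mul_add (n := n) (x := w (j.choose P) + Mj - 1)
    (y := w (k.choose P) + Mk - 1) (j := j) (k := k) (by omega) (by omega) (by omega) (by omega)
    (by linear_combination hjk)
  exact_mod_cast this.2

theorem le_v_coeff_of_v_rho {w : ℕ → ℤ}
    (hw : ∀ m : ℕ, 0 < m → ((w m : ℚ) : WithTop ℚ) = S.v (algebraMap K Ω (m : K)))
    (hn : 0 < n) (hα : S.v α = ((1 / n : ℚ) : WithTop ℚ)) {P : ℕ} (hP : 0 < P) {a b : ℕ}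
    (hρ : S.v (S.rho f n α P) = (((a * n + b : ℤ) : ℚ) / n : ℚ)) {i : ℕ} (hPi : P ≤ i)
    (hin : i < n) :
    (i < b → ((((2 + (a : ℤ) - w (i.choose P) : ℤ) : ℚ)) : WithTop ℚ)
        ≤ S.v (algebraMap K Ω (f.coeff i)))
      ∧ ((((1 + (a : ℤ) - w (i.choose P) : ℤ) : ℚ)) : WithTop ℚ)
        ≤ S.v (algebraMap K Ω (f.coeff i)) := by
  rcases eq_or_ne (f.coeff i) 0 with hi | hi
  · simp [hi, v_zero]
  obtain ⟨M, hM, hvi⟩ := exists_v_rhoTerm hw hn hα hPi hi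
  have hle : S.v (S.rho f n α P) ≤ S.v (rhoTerm f n α P i) :=
    v_rho_eq_inf hw hn hα hP ▸ Finset.inf_le (f := fun k => S.v (rhoTerm f n α P k))
      (Finset.mem_Icc.2 ⟨hPi, hin.le⟩)
  have hnQ : (0 : ℚ) < n := by exact_mod_cast hn
  rw [hρ, hvi, WithTop.coe_le_coe, div_le_div_iff_of_pos_right hnQ, Int.cast_le] at hle
  rw [hM, WithTop.coe_le_coe, WithTop.coe_le_coe, Int.cast_le, Int.cast_le]
  refine ⟨fun hib => ?_, ?_⟩
  · have := Int.lt_of_mul_add_le_mul_add (n := n) (x := a) (y := w (i.choose P) + M - 1)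
      (j := b) (k := i) (by positivity) (by omega) (by linear_combination hle)
    omega
  · have := Int.le_of_mul_add_le_mul_add (n := n) (x := a) (y := w (i.choose P) + M - 1)
      (j := b) (k := i) (by positivity) (by positivity) (by omega) (by linear_combination hle)
    omega

theorem v_coeff_eq_of_v_rho {w : ℕ → ℤ}
    (hw : ∀ m : ℕ, 0 < m → ((w m : ℚ) : WithTop ℚ) = S.v (algebraMap K Ω (m : K)))
    (hn : 0 < n) (hα : S.v α = ((1 / n : ℚ) : WithTop ℚ)) {P : ℕ} (hP : 0 < P) {a b : ℕ}
    (hb : b < n) (hb0 : b ≠ 0) (hρ : S.v (S.rho f n α P) = (((a * n + b : ℤ) : ℚ) / n : ℚ)) :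
    S.v (algebraMap K Ω (f.coeff b)) =
      ((((1 + (a : ℤ) - w (b.choose P) : ℤ) : ℚ)) : WithTop ℚ) := by
  have hPn : P ≤ n := by
    by_contra! h
    rw [rho_eq_sum_rhoTerm, Finset.Icc_eq_empty (by omega), Finset.sum_empty, v_zero] at hρ
    exact WithTop.top_ne_coe hρ
  obtain ⟨k, hk, hkinf⟩ := (Finset.Icc P n).exists_mem_eq_inf (Finset.nonempty_Icc.2 hPn)
    fun k => S.v (rhoTerm f n α P k)
  obtain ⟨hPk, hkn⟩ := Finset.mem_Icc.1 hk
  rw [v_rho_eq_inf hw hn hα hP, hkinf] at hρ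
  obtain ⟨M, hM, hvk⟩ :=
    exists_v_rhoTerm hw hn hα hPk (coeff_ne_zero_of_v_rhoTerm_ne_top (hρ ▸ WithTop.coe_ne_top))
  have hnQ : (n : ℚ) ≠ 0 := by exact_mod_cast hn.ne'
  rw [hvk, WithTop.coe_inj, div_left_inj' hnQ, Int.cast_inj] at hρ
  obtain ⟨hMa, hkb⟩ := Int.eq_and_eq_of_mul_add_eq_mul_add (n := n)
    (x := w (k.choose P) + M - 1) (y := a) (j := k) (k := b) (by omega) (by omega) (by omega)
    (by omega) (by linear_combination hρ)
  obtain rfl : k = b := by exact_mod_cast hkb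
  rw [hM, WithTop.coe_inj, Int.cast_inj]
  omega

end PadicSetup

theorem ramification_polygon_points_determine_coefficient_valuations_general
    (S : PadicSetup p K Ω)
    (w : ℕ → ℤ) (hw : ∀ m : ℕ, 0 < m → ((w m : ℚ) : WithTop ℚ) = S.v (algebraMap K Ω (m : K)))
    (f : K[X]) (n : ℕ) (hn : 0 < n) (hf : S.IsEisensteinOfDegree f n)
    (α : Ω) (hα : aeval α f = 0)
    (u : ℕ) (s J a b : ℕ → ℕ)
    (hJab : ∀ t ≤ u, J t = a t * n + b t) (hbn : ∀ t ≤ u, b t ≤ n - 1)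
    (hpoint : ∀ t ≤ u,
      ((n : ℚ) : WithTop ℚ) * S.v (S.rho f n α (p ^ s t)) = ((J t : ℚ) : WithTop ℚ)
      ∧ ∃ slope : ℚ, ∀ i ≤ n,
          ((((J t : ℚ) + slope * ((i : ℚ) - ((p ^ s t : ℕ) : ℚ)) : ℚ)) : WithTop ℚ)
            ≤ ((n : ℚ) : WithTop ℚ) * S.v (S.rho f n α i)) :
    ∀ t ≤ u,
      (∀ i, p ^ s t ≤ i → i ≤ n - 1 →
        (i < b t →
          ((((2 + (a t : ℤ) - w (i.choose (p ^ s t)) : ℤ) : ℚ)) : WithTop ℚ)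
            ≤ S.v (algebraMap K Ω (f.coeff i)))
        ∧ (b t ≤ i →
          ((((1 + (a t : ℤ) - w (i.choose (p ^ s t)) : ℤ) : ℚ)) : WithTop ℚ)
            ≤ S.v (algebraMap K Ω (f.coeff i))))
      ∧ (b t ≠ 0 →
          S.v (algebraMap K Ω (f.coeff (b t))) =
            ((((1 + (a t : ℤ) - w ((b t).choose (p ^ s t)) : ℤ) : ℚ)) : WithTop ℚ)) := by
  intro t ht
  have hP : 0 < p ^ s t := pow_pos (Fact.out : p.Prime).pos _
  have hb : b t < n := by have := hbn t ht; omega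
  have hvα := S.v_root_of_isEisensteinOfDegree hn hf hα
  have hρ : S.v (S.rho f n α (p ^ s t)) = (((a t * n + b t : ℤ) : ℚ) / n : ℚ) := by
    rw [WithTop.eq_coe_div_of_coe_mul_eq (by exact_mod_cast hn.ne') (hpoint t ht).1, hJab t ht]
    push_cast
    rfl
  refine ⟨fun i hPi hin => ?_, fun hb0 => PadicSetup.v_coeff_eq_of_v_rho hw hn hvα hP hb hb0 hρ⟩
  have h := PadicSetup.le_v_coeff_of_v_rho hw hn hvα hP hρ hPi (by omega)
  exact ⟨h.1, fun _ => h.2⟩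

/-- Let `f` be Eisenstein of degree `n` over `K` whose ramification
polygon passes through the points `(p^{s t}, J t)` for `0 ≤ t ≤ u` (i.e. `v_α(ρ_{p^{s t}})
= J t` and this point lies on the lower convex hull), where `J t = a t · n + b t` with
`0 ≤ b t ≤ n - 1`.  Then for `0 ≤ t ≤ u` and `p^{s t} ≤ i ≤ n - 1`:
`v_P(f_i) ≥ 2 + a t - v_P(C(i, p^{s t}))` if `i < b t`, and
`v_P(f_i) ≥ 1 + a t - v_P(C(i, p^{s t}))` if `i ≥ b t`; moreover if `b t ≠ 0` then
`v_P(f_{b t}) = 1 + a t - v_P(C(b t, p^{s t}))`. -/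
theorem ramification_polygon_points_determine_coefficient_valuations
    [FiniteDimensional ℚ_[p] K] [IsAlgClosed Ω] [Algebra.IsAlgebraic K Ω]
    (S : PadicSetup p K Ω)
    (w : ℕ → ℤ) (hw : ∀ m : ℕ, 0 < m → ((w m : ℚ) : WithTop ℚ) = S.v (algebraMap K Ω (m : K)))
    (f : K[X]) (n : ℕ) (hn : 0 < n) (hf : S.IsEisensteinOfDegree f n)
    (α : Ω) (hα : aeval α f = 0)
    (u : ℕ) (s J a b : ℕ → ℕ)
    (hs0 : s 0 = 0)
    (hJab : ∀ t ≤ u, J t = a t * n + b t) (hbn : ∀ t ≤ u, b t ≤ n - 1)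
    (hpoint : ∀ t ≤ u,
      ((n : ℚ) : WithTop ℚ) * S.v (S.rho f n α (p ^ s t)) = ((J t : ℚ) : WithTop ℚ)
      ∧ ∃ slope : ℚ, ∀ i ≤ n,
          ((((J t : ℚ) + slope * ((i : ℚ) - ((p ^ s t : ℕ) : ℚ)) : ℚ)) : WithTop ℚ)
            ≤ ((n : ℚ) : WithTop ℚ) * S.v (S.rho f n α i)) :
    ∀ t ≤ u,
      (∀ i, p ^ s t ≤ i → i ≤ n - 1 →
        (i < b t →
          ((((2 + (a t : ℤ) - w (i.choose (p ^ s t)) : ℤ) : ℚ)) : WithTop ℚ)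
            ≤ S.v (algebraMap K Ω (f.coeff i)))
        ∧ (b t ≤ i →
          ((((1 + (a t : ℤ) - w (i.choose (p ^ s t)) : ℤ) : ℚ)) : WithTop ℚ)
            ≤ S.v (algebraMap K Ω (f.coeff i))))
      ∧ (b t ≠ 0 →
          S.v (algebraMap K Ω (f.coeff (b t))) =
            ((((1 + (a t : ℤ) - w ((b t).choose (p ^ s t)) : ℤ) : ℚ)) : WithTop ℚ)) :=
  ramification_polygon_points_determine_coefficient_valuations_general S w hw f n hn hf α hα u s J a
    b hJab hbn hpoint
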